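/- arXiv:0809.2436 — 3 statements merged into one kernel-verified Lean document; each statement's English description precedes it below -/
import Mathlib

section
/- If f : ℝ → ℝ is continuous, bounded on [0,∞), then the Szasz operator S_N(f)(x) = e^{-Nx} ∑_{k=0}^∞ f(k/N) (Nx)^k / k! converges to f(x) as N → ∞, uniformly on every compact subset of (0,∞). -/
/-!
The weights `e^{-t} t^k / k!` form the Poisson distribution of mean and variance `t`, so
`S_N f (x)` is the expectation of `f (X / N)` with `X` Poisson of mean `N x`; thus `X / N` has mean
`x` and variance `x / N`. Uniform continuity of `f` near the compact `K` together with its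
boundedness gives `|f y - f x| ≤ ε + c (y - x)²` for `x ∈ K`, `y ≥ 0`; averaging this against the
weights yields `|S_N f (x) - f x| ≤ ε + c x / N`, which is uniformly small on `K` for large `N`.
-/

open Filter
open scoped Nat

theorem Real.hasSum_pow_div_factorial (t : ℝ) :
    HasSum (fun k : ℕ => t ^ k / k !) (Real.exp t) := by
  rw [Real.exp_eq_exp_ℝ]
  exact NormedSpace.expSeries_div_hasSum_exp t

theorem Real.hasSum_mul_pow_div_factorial (t : ℝ) :
    HasSum (fun k : ℕ => k * (t ^ k / k !)) (t * Real.exp t) := by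
  refine (hasSum_nat_add_iff' 1).mp ?_
  simp only [Finset.sum_range_one, CharP.cast_eq_zero, zero_mul, sub_zero]
  refine ((Real.hasSum_pow_div_factorial t).mul_left t).congr_fun fun k => ?_
  push_cast [Nat.factorial_succ, pow_succ]
  field_simp

theorem Real.hasSum_mul_sub_one_mul_pow_div_factorial (t : ℝ) :
    HasSum (fun k : ℕ => k * (k - 1) * (t ^ k / k !)) (t ^ 2 * Real.exp t) := by
  refine (hasSum_nat_add_iff' 2).mp ?_
  simp only [Finset.sum_range_succ, Finset.sum_range_zero, CharP.cast_eq_zero, Nat.cast_one,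
    zero_mul, sub_self, mul_zero, add_zero, sub_zero]
  refine ((Real.hasSum_pow_div_factorial t).mul_left (t ^ 2)).congr_fun fun k => ?_
  push_cast [Nat.factorial_succ, pow_succ]
  field_simp
  ring

theorem Real.hasSum_sq_sub_mul_pow_div_factorial (t : ℝ) :
    HasSum (fun k : ℕ => (k - t) ^ 2 * (t ^ k / k !)) (t * Real.exp t) := by
  have := ((Real.hasSum_mul_sub_one_mul_pow_div_factorial t).add
    ((Real.hasSum_mul_pow_div_factorial t).mul_left (1 - 2 * t))).add
    ((Real.hasSum_pow_div_factorial t).mul_left (t ^ 2))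
  convert this.congr_fun fun k => ?_ using 1 <;> ring

theorem abs_tsum_mul_sub_le {ι : Type*} {p a d : ι → ℝ} {b ε c v : ℝ} (hp : ∀ i, 0 ≤ p i)
    (hp1 : HasSum p 1) (hd : HasSum (fun i => p i * d i) v) (ha : ∀ i, |a i - b| ≤ ε + c * d i) :
    |∑' i, p i * a i - b| ≤ ε + c * v := by
  have hmajorant : HasSum (fun i => p i * (ε + c * d i)) (ε + c * v) := by
    have := (hp1.mul_right ε).add (hd.mul_left c)
    rw [one_mul] at this
    exact this.congr_fun fun i => by ring
  have hdom : ∀ i, ‖p i * (a i - b)‖ ≤ p i * (ε + c * d i) := fun i => by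
    rw [norm_mul, Real.norm_of_nonneg (hp i), Real.norm_eq_abs]
    exact mul_le_mul_of_nonneg_left (ha i) (hp i)
  have hcentered : HasSum (fun i => p i * (a i - b)) (∑' i, p i * a i - b) := by
    have hsum := (Summable.of_norm_bounded hmajorant.summable hdom).hasSum
    have hpa := hsum.add (hp1.mul_right b)
    rw [one_mul] at hpa
    rwa [(hpa.congr_fun fun i => by ring : HasSum (fun i => p i * a i) _).tsum_eq,
      add_sub_cancel_right]
  rw [← Real.norm_eq_abs, ← hcentered.tsum_eq]
  exact tsum_of_norm_bounded hmajorant hdom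

theorem IsCompact.exists_abs_sub_le_add_mul_dist_sq {α : Type*} [PseudoMetricSpace α]
    {f : α → ℝ} {K s : Set α} {C ε : ℝ} (hK : IsCompact K) (hf : ∀ x ∈ K, ContinuousAt f x)
    (hKs : K ⊆ s) (hC : ∀ y ∈ s, |f y| ≤ C) (hε : 0 < ε) :
    ∃ c, 0 ≤ c ∧ ∀ x ∈ K, ∀ y ∈ s, |f y - f x| ≤ ε + c * dist y x ^ 2 := by
  obtain ⟨δ, hδ, hclose⟩ := Metric.mem_uniformity_dist.mp
    (hK.uniformContinuousAt_of_continuousAt f hf (Metric.dist_mem_uniformity hε))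
  have hc : 0 ≤ 2 * |C| / δ ^ 2 := by positivity
  refine ⟨2 * |C| / δ ^ 2, hc, fun x hx y hy => ?_⟩
  have hquad : 0 ≤ 2 * |C| / δ ^ 2 * dist y x ^ 2 := by positivity
  rcases lt_or_ge (dist x y) δ with hnear | hfar
  · have : |f x - f y| < ε := hclose hnear hx
    rw [abs_sub_comm] at this
    linarith
  · have hosc : |f y - f x| ≤ 2 * |C| := by
      calc |f y - f x| ≤ |f y| + |f x| := abs_sub _ _
        _ ≤ |C| + |C| := add_le_add ((hC y hy).trans (le_abs_self C))
            ((hC x (hKs hx)).trans (le_abs_self C))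
        _ = 2 * |C| := by ring
    have : 2 * |C| ≤ 2 * |C| / δ ^ 2 * dist y x ^ 2 := by
      rw [div_mul_eq_mul_div, le_div_iff₀ (by positivity), dist_comm]
      gcongr
    linarith

noncomputable def szasz (f : ℝ → ℝ) (N x : ℝ) : ℝ :=
  Real.exp (-(N * x)) * ∑' k : ℕ, f (k / N) * (N * x) ^ k / k !

noncomputable def szaszWeight (t : ℝ) (k : ℕ) : ℝ :=
  Real.exp (-t) * (t ^ k / k !)

theorem szaszWeight_nonneg {t : ℝ} (ht : 0 ≤ t) (k : ℕ) : 0 ≤ szaszWeight t k := by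
  unfold szaszWeight
  positivity

theorem hasSum_szaszWeight (t : ℝ) : HasSum (szaszWeight t) 1 := by
  have := (Real.hasSum_pow_div_factorial t).mul_left (Real.exp (-t))
  rwa [← Real.exp_add, neg_add_cancel, Real.exp_zero] at this

theorem hasSum_szaszWeight_mul_sq_sub {N : ℝ} (hN : N ≠ 0) (x : ℝ) :
    HasSum (fun k : ℕ => szaszWeight (N * x) k * (k / N - x) ^ 2) (x / N) := by
  have hvalue : Real.exp (-(N * x)) / N ^ 2 * (N * x * Real.exp (N * x)) = x / N := by
    rw [show Real.exp (-(N * x)) / N ^ 2 * (N * x * Real.exp (N * x))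
        = Real.exp (-(N * x)) * Real.exp (N * x) * x / N by field_simp, ← Real.exp_add,
      neg_add_cancel, Real.exp_zero, one_mul]
  rw [← hvalue]
  refine ((Real.hasSum_sq_sub_mul_pow_div_factorial (N * x)).mul_left _).congr_fun fun k => ?_
  unfold szaszWeight
  field_simp

theorem szasz_eq_tsum (f : ℝ → ℝ) (N x : ℝ) :
    szasz f N x = ∑' k : ℕ, szaszWeight (N * x) k * f (k / N) := by
  rw [szasz, ← tsum_mul_left]
  exact tsum_congr fun k => by unfold szaszWeight; ring

theorem abs_szasz_sub_le {f : ℝ → ℝ} {N x ε c : ℝ} (hN : 0 < N) (hx : 0 ≤ x)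
    (hf : ∀ y, 0 ≤ y → |f y - f x| ≤ ε + c * (y - x) ^ 2) :
    |szasz f N x - f x| ≤ ε + c * (x / N) := by
  rw [szasz_eq_tsum]
  exact abs_tsum_mul_sub_le (szaszWeight_nonneg (by positivity)) (hasSum_szaszWeight _)
    (hasSum_szaszWeight_mul_sq_sub hN.ne' x) fun k => hf _ (by positivity)

/-- If `f : ℝ → ℝ` is continuous and bounded on `[0,∞)`, then the Szasz operator
`S_N(f)(x) = e^{-Nx} ∑_{k=0}^∞ f(k/N) (Nx)^k / k!` converges to `f` as `N → ∞`,
uniformly on every compact subset of `(0,∞)`. -/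
theorem szasz_tendstoUniformlyOn (f : ℝ → ℝ) (hf : Continuous f)
    (hbd : ∃ C : ℝ, ∀ x : ℝ, 0 ≤ x → |f x| ≤ C)
    (K : Set ℝ) (hK : IsCompact K) (hKsub : K ⊆ Set.Ioi (0 : ℝ)) :
    TendstoUniformlyOn
      (fun (N : ℕ) (x : ℝ) =>
        Real.exp (-(N * x)) * ∑' k : ℕ, f (k / N) * (N * x) ^ k / (Nat.factorial k))
      f atTop K := by
  obtain ⟨C, hC⟩ := hbd
  obtain ⟨M, hM⟩ := hK.bddAbove
  change TendstoUniformlyOn (fun N : ℕ => szasz f N) f atTop K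
  rw [Metric.tendstoUniformlyOn_iff]
  intro ε hε
  obtain ⟨c, hc, hmodulus⟩ := hK.exists_abs_sub_le_add_mul_dist_sq (fun x _ => hf.continuousAt)
    (hKsub.trans Set.Ioi_subset_Ici_self) hC (half_pos hε)
  have hsmall : ∀ᶠ N : ℕ in atTop, c * (M / N) < ε / 2 :=
    ((tendsto_const_div_atTop_nhds_zero_nat M).const_mul c).eventually_lt_const
      (by simpa using half_pos hε)
  filter_upwards [hsmall, eventually_gt_atTop 0] with N hNsmall hNpos x hx
  rw [dist_comm, Real.dist_eq]
  calc |szasz f N x - f x| ≤ ε / 2 + c * (x / N) :=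
        abs_szasz_sub_le (by positivity) (hKsub hx).le fun y hy => by
          simpa only [Real.dist_eq, sq_abs] using hmodulus x hx y hy
    _ ≤ ε / 2 + c * (M / N) := by gcongr; exact hM hx
    _ < ε := by linarith
end

section
/- For f continuous with compact support on [0,∞) and x > 0, the dilated Bernstein polynomial ∑_{k=0}^N C(N,k) f(k) (x/N)^k (1 − x/N)^{N−k} converges, as N → ∞, to the Szasz value ∑_{k=0}^∞ e^{-x} x^k/k! f(k). -/
open Filter Topology Finset

/-! Since `f` has compact support, only the finitely many terms with `f k ≠ 0` matter, and for each
fixed `k` the binomial weight `C(N,k) (x/N)^k (1 - x/N)^(N-k)` tends to the Poisson weight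
`e^{-x} x^k / k!` by the Poisson limit theorem. -/

lemma HasCompactSupport.eventually_natCast_eq_zero {E : Type*} [Zero E] {f : ℝ → E}
    (hf : HasCompactSupport f) : ∀ᶠ k : ℕ in atTop, f k = 0 := by
  rw [hasCompactSupport_iff_eventuallyEq, coclosedCompact_eq_cocompact] at hf
  exact (tendsto_natCast_atTop_atTop.mono_right atTop_le_cocompact).eventually hf

lemma tendsto_sum_range_succ_mul_of_eventually_eq_zero {R : Type*} [Semiring R]
    [TopologicalSpace R] [IsTopologicalSemiring R] {g : ℕ → ℕ → R} {a c : ℕ → R}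
    (hg : ∀ k, Tendsto (g · k) atTop (𝓝 (a k))) (hc : ∀ᶠ k in atTop, c k = 0) :
    Tendsto (fun N ↦ ∑ k ∈ range (N + 1), g N k * c k) atTop (𝓝 (∑' k, a k * c k)) := by
  obtain ⟨M, hM⟩ := eventually_atTop.1 hc
  rw [tsum_eq_sum (s := range M) fun k hk ↦ by rw [hM k (by simpa using hk), mul_zero]]
  refine (tendsto_finsetSum _ fun k _ ↦ (hg k).mul_const (c k)).congr' ?_
  filter_upwards [eventually_ge_atTop M] with N hN
  exact sum_subset (range_subset_range.2 (by omega)) fun k _ hk ↦ by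
    rw [hM k (by simpa using hk), mul_zero]

lemma tendsto_natCast_mul_div_self (x : ℝ) : Tendsto (fun N : ℕ ↦ N * (x / N)) atTop (𝓝 x) :=
  tendsto_const_nhds.congr' <| by
    filter_upwards [eventually_ne_atTop 0] with N hN
    field_simp

theorem dilated_bernstein_tendsto_szasz_general (f : ℝ → ℝ)
    (hsupp : HasCompactSupport f) (x : ℝ) :
    Tendsto
      (fun N : ℕ => ∑ k ∈ Finset.range (N + 1),
        (N.choose k : ℝ) * f k * (x / N) ^ k * (1 - x / N) ^ (N - k))
      atTop
      (nhds (∑' k : ℕ, Real.exp (-x) * x ^ k / (Nat.factorial k) * f k)) := by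
  have hpoisson (k : ℕ) := ProbabilityTheory.tendsto_choose_mul_pow_of_tendsto_mul_atTop k
    (tendsto_natCast_mul_div_self x)
  convert tendsto_sum_range_succ_mul_of_eventually_eq_zero hpoisson
    hsupp.eventually_natCast_eq_zero using 3 with N k
  ring

/-- For `f` continuous with compact support and `x > 0`, the dilated Bernstein polynomial
`∑_{k=0}^N C(N,k) f(k) (x/N)^k (1 − x/N)^{N−k}` converges, as `N → ∞`, to the Szasz value
`∑_{k=0}^∞ e^{-x} x^k/k! f(k)`. -/
theorem dilated_bernstein_tendsto_szasz (f : ℝ → ℝ) (hf : Continuous f)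
    (hsupp : HasCompactSupport f) (x : ℝ) (hx : 0 < x) :
    Tendsto
      (fun N : ℕ => ∑ k ∈ Finset.range (N + 1),
        (N.choose k : ℝ) * f k * (x / N) ^ k * (1 - x / N) ^ (N - k))
      atTop
      (nhds (∑' k : ℕ, Real.exp (-x) * x ^ k / (Nat.factorial k) * f k)) :=
  dilated_bernstein_tendsto_szasz_general f hsupp x
end

section
/- Negative binomial operator convergence: for f continuous and bounded on [0,∞) and x > 0, T_N(f)(x) = (1+x)^{-N} ∑_{j=0}^∞ (N)_j f(j/N) (x/(1+x))^j / j! converges to f(x) as N → ∞. -/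
/-!
`T_N f (x)` is the mean of `f (Y / N)` for `Y` negative binomial with mean `N x` and variance
`N x (1 + x)`; both moments follow from the shift identity `(j + 1) w_N (j + 1) = N x w_{N+1} (j)`
for the weights. Continuity at `x` and boundedness give `|f t - f x| ≤ ε + K (t - x)²` on
`[0, ∞)`, and averaging this against the weights bounds `|T_N f (x) - f x|` by
`ε + K x (1 + x) / N`.
-/

open Filter

/-- The rising factorial `(N)_j = N(N+1)⋯(N+j−1)`. -/
def risingFactorial (N j : ℕ) : ℕ := ∏ i ∈ Finset.range j, (N + i)

open Topology

lemma risingFactorial_eq_ascFactorial (N j : ℕ) : risingFactorial N j = N.ascFactorial j :=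
  (Nat.ascFactorial_eq_prod_range N j).symm

lemma hasSum_ascFactorial_div_factorial_mul_pow {𝕜 : Type*} [NormedField 𝕜] [CharZero 𝕜]
    (N : ℕ) {r : 𝕜} (hr : ‖r‖ < 1) :
    HasSum (fun j ↦ (N.ascFactorial j : 𝕜) / j.factorial * r ^ j) ((1 - r) ^ N)⁻¹ := by
  cases N with
  | zero =>
    convert hasSum_ite_eq 0 (1 : 𝕜) using 1
    · funext j
      cases j <;> simp [Nat.zero_ascFactorial]
    · simp
  | succ k =>
    convert hasSum_choose_mul_geometric_of_norm_lt_one k hr using 1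
    · funext j
      rw [Nat.ascFactorial_eq_factorial_mul_choose, ← Nat.choose_symm_add, add_comm k j]
      push_cast
      field_simp [Nat.factorial_ne_zero]
    · rw [one_div]

/-- `P(Y = j)` for `Y` negative binomial with parameters `N` and `1 / (1 + x)`. -/
noncomputable def negBinomialWeight (N : ℕ) (x : ℝ) (j : ℕ) : ℝ :=
  (N.ascFactorial j : ℝ) / j.factorial * (x / (1 + x)) ^ j / (1 + x) ^ N

section negBinomialWeight

variable {x : ℝ}

lemma negBinomialWeight_nonneg (hx : 0 ≤ x) (N j : ℕ) : 0 ≤ negBinomialWeight N x j := by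
  unfold negBinomialWeight
  positivity

lemma hasSum_negBinomialWeight (hx : 0 ≤ x) (N : ℕ) : HasSum (negBinomialWeight N x) 1 := by
  have hx1 : 1 + x ≠ 0 := by positivity
  have hr : ‖x / (1 + x)‖ < 1 := by
    rw [Real.norm_of_nonneg (by positivity), div_lt_one (by positivity)]
    linarith
  have h := (hasSum_ascFactorial_div_factorial_mul_pow N hr).div_const ((1 + x) ^ N)
  rwa [show 1 - x / (1 + x) = (1 + x)⁻¹ by field_simp; ring, inv_pow, inv_inv,
    div_self (pow_ne_zero _ hx1)] at h

lemma succ_mul_negBinomialWeight_succ (hx : 1 + x ≠ 0) (N j : ℕ) :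
    (j + 1 : ℝ) * negBinomialWeight N x (j + 1) = N * x * negBinomialWeight (N + 1) x j := by
  have hascFactorial : (N.ascFactorial (j + 1) : ℝ) = N * (N + 1).ascFactorial j := by
    rw [Nat.ascFactorial_succ, ← Nat.succ_ascFactorial]
    push_cast
    rfl
  have hj : (j.factorial : ℝ) ≠ 0 := by positivity
  simp only [negBinomialWeight, hascFactorial, Nat.factorial_succ, div_pow, pow_succ]
  push_cast
  field_simp

lemma hasSum_mul_negBinomialWeight (hx : 0 ≤ x) (N : ℕ) :
    HasSum (fun j : ℕ ↦ j * negBinomialWeight N x j) (N * x) := by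
  have h := (hasSum_negBinomialWeight hx (N + 1)).mul_left (N * x)
  rw [mul_one] at h
  refine (hasSum_nat_add_iff' 1).mp ?_
  simpa [succ_mul_negBinomialWeight_succ (by positivity : 1 + x ≠ 0)] using h

lemma hasSum_mul_sub_one_mul_negBinomialWeight (hx : 0 ≤ x) (N : ℕ) :
    HasSum (fun j : ℕ ↦ j * (j - 1) * negBinomialWeight N x j) (N * (N + 1) * x ^ 2) := by
  have h := (hasSum_mul_negBinomialWeight hx (N + 1)).mul_left (N * x)
  rw [show (N : ℝ) * x * ((N + 1 : ℕ) * x) = N * (N + 1) * x ^ 2 by push_cast; ring] at h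
  refine (hasSum_nat_add_iff' 1).mp ?_
  simp only [Finset.range_one, Finset.sum_singleton, CharP.cast_eq_zero, zero_mul, sub_zero]
  refine h.congr_fun fun j ↦ ?_
  push_cast
  rw [add_sub_cancel_right, mul_right_comm, succ_mul_negBinomialWeight_succ (by positivity)]
  ring

lemma hasSum_sub_sq_mul_negBinomialWeight (hx : 0 ≤ x) (N : ℕ) :
    HasSum (fun j : ℕ ↦ (j - N * x) ^ 2 * negBinomialWeight N x j) (N * x * (1 + x)) := by
  have h := ((hasSum_mul_sub_one_mul_negBinomialWeight hx N).add
    ((hasSum_mul_negBinomialWeight hx N).mul_left (1 - 2 * N * x))).add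
    ((hasSum_negBinomialWeight hx N).mul_left ((N * x) ^ 2))
  rw [show N * (N + 1) * x ^ 2 + (1 - 2 * N * x) * (N * x) + (N * x) ^ 2 * 1 =
    (N : ℝ) * x * (1 + x) by ring] at h
  exact h.congr_fun fun j ↦ by ring

lemma hasSum_negBinomialWeight_mul_div_sub_sq (hx : 0 ≤ x) {N : ℕ} (hN : N ≠ 0) :
    HasSum (fun j : ℕ ↦ negBinomialWeight N x j * (j / N - x) ^ 2) (x * (1 + x) / N) := by
  have hN' : (N : ℝ) ≠ 0 := Nat.cast_ne_zero.mpr hN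
  have h := (hasSum_sub_sq_mul_negBinomialWeight hx N).div_const (N ^ 2)
  rw [show N * x * (1 + x) / N ^ 2 = x * (1 + x) / N by field_simp] at h
  exact h.congr_fun fun j ↦ by field_simp

end negBinomialWeight

lemma exists_abs_sub_le_add_mul_sq {f : ℝ → ℝ} {S : Set ℝ} {C x ε : ℝ} (hf : ContinuousAt f x)
    (hC : ∀ t ∈ S, |f t| ≤ C) (hε : 0 < ε) :
    ∃ K : ℝ, ∀ t ∈ S, |f t - f x| ≤ ε + K * (t - x) ^ 2 := by
  obtain ⟨δ, hδ, hδf⟩ := Metric.continuousAt_iff.mp hf ε hε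
  refine ⟨(C + |f x|) / δ ^ 2, fun t ht ↦ ?_⟩
  have hC0 : 0 ≤ C + |f x| := by linarith [(abs_nonneg _).trans (hC t ht), abs_nonneg (f x)]
  have hK0 : 0 ≤ (C + |f x|) / δ ^ 2 * (t - x) ^ 2 := by positivity
  rcases lt_or_ge |t - x| δ with hnear | hfar
  · have hclose : |f t - f x| < ε := by simpa only [Real.dist_eq] using hδf (by rwa [Real.dist_eq])
    linarith
  · have hsq : δ ^ 2 ≤ (t - x) ^ 2 := by
      rw [← sq_abs (t - x)]
      gcongr
    calc |f t - f x| ≤ |f t| + |f x| := abs_sub _ _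
      _ ≤ C + |f x| := by linarith [hC t ht]
      _ ≤ (C + |f x|) / δ ^ 2 * (t - x) ^ 2 := by
        rw [div_mul_eq_mul_div, le_div_iff₀ (by positivity)]
        exact mul_le_mul_of_nonneg_left hsq hC0
      _ ≤ ε + (C + |f x|) / δ ^ 2 * (t - x) ^ 2 := by linarith

lemma abs_tsum_mul_comp_sub_le {w t : ℕ → ℝ} {f : ℝ → ℝ} {x ε K V : ℝ} (hw0 : ∀ j, 0 ≤ w j)
    (hw1 : HasSum w 1) (hV : HasSum (fun j ↦ w j * (t j - x) ^ 2) V)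
    (hfK : ∀ j, |f (t j) - f x| ≤ ε + K * (t j - x) ^ 2) :
    |∑' j, w j * f (t j) - f x| ≤ ε + K * V := by
  have hbound : HasSum (fun j ↦ ε * w j + K * (w j * (t j - x) ^ 2)) (ε + K * V) := by
    simpa using (hw1.mul_left ε).add (hV.mul_left K)
  have hdev : ∀ j, ‖w j * (f (t j) - f x)‖ ≤ ε * w j + K * (w j * (t j - x) ^ 2) := fun j ↦ by
    rw [Real.norm_eq_abs, abs_mul, abs_of_nonneg (hw0 j)]
    nlinarith [hfK j, hw0 j]
  have hsum : Summable fun j ↦ w j * (f (t j) - f x) :=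
    Summable.of_norm_bounded hbound.summable hdev
  have hsplit : ∑' j, w j * f (t j) - f x = ∑' j, w j * (f (t j) - f x) := by
    simp only [mul_sub]
    rw [Summable.tsum_sub ((hsum.add (hw1.summable.mul_right (f x))).congr fun j ↦ by ring)
      (hw1.summable.mul_right (f x)), tsum_mul_right, hw1.tsum_eq, one_mul]
  rw [hsplit, ← Real.norm_eq_abs]
  exact tsum_of_norm_bounded hbound hdev

theorem tendsto_tsum_mul_comp_of_tendsto_variance {ι : Type*} {l : Filter ι} {f : ℝ → ℝ}
    {S : Set ℝ} {C x : ℝ} (hf : ContinuousAt f x) (hC : ∀ t ∈ S, |f t| ≤ C)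
    {w t : ι → ℕ → ℝ} {V : ι → ℝ} (hw0 : ∀ n j, 0 ≤ w n j) (hw1 : ∀ n, HasSum (w n) 1)
    (htS : ∀ n j, t n j ∈ S) (hV : ∀ᶠ n in l, HasSum (fun j ↦ w n j * (t n j - x) ^ 2) (V n))
    (hV0 : Tendsto V l (𝓝 0)) :
    Tendsto (fun n ↦ ∑' j, w n j * f (t n j)) l (𝓝 (f x)) := by
  refine Metric.tendsto_nhds.mpr fun ε hε ↦ ?_
  obtain ⟨K, hK⟩ := exists_abs_sub_le_add_mul_sq hf hC (half_pos hε)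
  have hKV : ∀ᶠ n in l, K * V n < ε / 2 := by
    have := hV0.const_mul K
    rw [mul_zero] at this
    exact this.eventually (gt_mem_nhds (half_pos hε))
  filter_upwards [hV, hKV] with n hVn hKVn
  rw [Real.dist_eq]
  calc |∑' j, w n j * f (t n j) - f x| ≤ ε / 2 + K * V n :=
        abs_tsum_mul_comp_sub_le (hw0 n) (hw1 n) hVn fun j ↦ hK _ (htS n j)
    _ < ε := by linarith

/-- Negative binomial operator convergence: for `f` continuous and bounded on `[0,∞)`
and `x > 0`, `T_N(f)(x) = (1+x)^{-N} ∑_{j=0}^∞ (N)_j f(j/N) (x/(1+x))^j / j!`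
converges to `f(x)` as `N → ∞`. -/
theorem negative_binomial_operator_tendsto (f : ℝ → ℝ) (hf : Continuous f)
    (hbd : ∃ C : ℝ, ∀ t : ℝ, 0 ≤ t → |f t| ≤ C) (x : ℝ) (hx : 0 < x) :
    Tendsto
      (fun N : ℕ =>
        (1 + x) ^ (-(N : ℤ)) *
          ∑' j : ℕ, (risingFactorial N j : ℝ) * f ((j : ℝ) / N) * (x / (1 + x)) ^ j /
            (Nat.factorial j))
      atTop (nhds (f x)) := by
  obtain ⟨C, hC⟩ := hbd
  have hT : ∀ N : ℕ, ∑' j, negBinomialWeight N x j * f (j / N) = (1 + x) ^ (-(N : ℤ)) *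
      ∑' j : ℕ, (risingFactorial N j : ℝ) * f (j / N) * (x / (1 + x)) ^ j / j.factorial :=
    fun N ↦ by
      rw [← tsum_mul_left]
      refine tsum_congr fun j ↦ ?_
      rw [negBinomialWeight, risingFactorial_eq_ascFactorial, zpow_neg, zpow_natCast]
      ring
  refine Tendsto.congr hT ?_
  exact tendsto_tsum_mul_comp_of_tendsto_variance hf.continuousAt (S := Set.Ici 0) hC
    (negBinomialWeight_nonneg hx.le) (hasSum_negBinomialWeight hx.le)
    (fun N j ↦ Set.mem_Ici.mpr (by positivity))
    ((eventually_ne_atTop 0).mono fun _ ↦ hasSum_negBinomialWeight_mul_div_sub_sq hx.le)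
    (tendsto_const_div_atTop_nhds_zero_nat _)
end
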